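/- arXiv:1705.06183 — 2 statements merged into one kernel-verified Lean document; each statement's English description precedes it below -/
import Mathlib

section
/- Let r, σ, b > 0 and a ∈ ℝ with a < 0, σ = −a·r and r > 1. Set ξ = (σ·b/(2a²))·(a(r−2) − σ + √((σ − a·r)² + 4aσ)). Then ξ = r·b·(√(r(r−1)) − (r−1)) > 0, σ·b + a·ξ > 0, and the two points S± = (±x₁, ±y₁, z₁), where x₁ = σ·b·√ξ/(σ·b + a·ξ), y₁ = √ξ, z₁ = σ·ξ/(σ·b + a·ξ), are zeros of the vector field f of the Lorenz-like system (i.e., equilibria). -/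
/-!
The equilibria off the `z`-axis satisfy `x = σ b y / D`, `z = σ y² / D` with `D = σ b + a y²`,
and the remaining equation says that `ξ = y²` is a root of the quadratic
`a² ξ² − σ b (a (r − 2) − σ) ξ + σ² b² (1 − r) = 0`; the given `ξ` is its root with the `+`
sign. When `σ = −a r` the discriminant is `4 a² r (r − 1)`, which yields the closed form of `ξ`
and `σ b + a ξ = a r b (√(r (r − 1)) − r)`; both signs follow from `r − 1 < √(r (r − 1)) < r`.
-/

open Real

def IsLorenzLikeEquilibrium (r σ b a x y z : ℝ) : Prop :=
  -σ * (x - y) - a * y * z = 0 ∧ r * x - y - x * z = 0 ∧ -b * z + x * y = 0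

theorem IsLorenzLikeEquilibrium.neg {r σ b a x y z : ℝ}
    (h : IsLorenzLikeEquilibrium r σ b a x y z) :
    IsLorenzLikeEquilibrium r σ b a (-x) (-y) z := by
  obtain ⟨h₁, h₂, h₃⟩ := h
  exact ⟨by linear_combination -h₁, by linear_combination -h₂, by linear_combination h₃⟩

theorem isLorenzLikeEquilibrium_of_quadratic {r σ b a ξ : ℝ} (hξ : 0 ≤ ξ)
    (hD : σ * b + a * ξ ≠ 0)
    (hq : r * σ * b * (σ * b + a * ξ) - (σ * b + a * ξ) ^ 2 - σ ^ 2 * b * ξ = 0) :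
    IsLorenzLikeEquilibrium r σ b a (σ * b * √ξ / (σ * b + a * ξ)) (√ξ)
      (σ * ξ / (σ * b + a * ξ)) := by
  have hy : √ξ ^ 2 = ξ := sq_sqrt hξ
  refine ⟨?_, ?_, ?_⟩
  · field_simp
    ring
  · field_simp
    linear_combination √ξ * hq
  · field_simp
    linear_combination σ * b / (σ * b + a * ξ) * hy

theorem lorenzLike_quadratic_of_eq_root {r σ b a s ξ : ℝ} (ha : a ≠ 0)
    (hs : s ^ 2 = (σ - a * r) ^ 2 + 4 * a * σ)
    (hξ : ξ = σ * b / (2 * a ^ 2) * (a * (r - 2) - σ + s)) :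
    r * σ * b * (σ * b + a * ξ) - (σ * b + a * ξ) ^ 2 - σ ^ 2 * b * ξ = 0 := by
  subst hξ
  field_simp
  linear_combination -σ ^ 2 * b ^ 2 * hs

theorem lorenzLike_discriminant_eq {r σ a : ℝ} (hσ : σ = -a * r) :
    (σ - a * r) ^ 2 + 4 * a * σ = (2 * a) ^ 2 * (r * (r - 1)) := by
  subst hσ
  ring

theorem sqrt_lorenzLike_discriminant {r σ a : ℝ} (ha : a ≤ 0) (hσ : σ = -a * r) :
    √((σ - a * r) ^ 2 + 4 * a * σ) = -2 * a * √(r * (r - 1)) := by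
  rw [lorenzLike_discriminant_eq hσ, sqrt_mul (sq_nonneg _), sqrt_sq_eq_abs,
    abs_of_nonpos (by linarith)]
  ring

theorem sub_one_lt_sqrt_mul_sub_one {r : ℝ} (hr : 1 < r) : r - 1 < √(r * (r - 1)) := by
  rw [lt_sqrt (by linarith)]
  nlinarith

theorem sqrt_mul_sub_one_lt {r : ℝ} (hr : 0 < r) : √(r * (r - 1)) < r := by
  rw [sqrt_lt' hr]
  nlinarith

theorem stmt_8_general (r σ b a : ℝ) (hb : 0 < b)
    (ha : a < 0) (hσar : σ = -a * r) (hr1 : 1 < r) :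
    let ξ := σ * b / (2 * a ^ 2) *
      (a * (r - 2) - σ + Real.sqrt ((σ - a * r) ^ 2 + 4 * a * σ))
    let x₁ := σ * b * Real.sqrt ξ / (σ * b + a * ξ)
    let y₁ := Real.sqrt ξ
    let z₁ := σ * ξ / (σ * b + a * ξ)
    ξ = r * b * (Real.sqrt (r * (r - 1)) - (r - 1)) ∧ 0 < ξ ∧
    0 < σ * b + a * ξ ∧
    (-σ * (x₁ - y₁) - a * y₁ * z₁ = 0 ∧
      r * x₁ - y₁ - x₁ * z₁ = 0 ∧
      -b * z₁ + x₁ * y₁ = 0) ∧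
    (-σ * (-x₁ - -y₁) - a * -y₁ * z₁ = 0 ∧
      r * -x₁ - -y₁ - -x₁ * z₁ = 0 ∧
      -b * z₁ + -x₁ * -y₁ = 0) := by
  intro ξ x₁ y₁ z₁
  have hr : 0 < r := by linarith
  have hξ : ξ = r * b * (√(r * (r - 1)) - (r - 1)) := by
    simp only [ξ]
    rw [sqrt_lorenzLike_discriminant ha.le hσar, hσar]
    field_simp [ha.ne]
    ring
  have hξ_pos : 0 < ξ := by
    rw [hξ]
    exact mul_pos (mul_pos hr hb) (by linarith [sub_one_lt_sqrt_mul_sub_one hr1])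
  have hD : 0 < σ * b + a * ξ := by
    have hD_eq : σ * b + a * ξ = a * r * b * (√(r * (r - 1)) - r) := by
      rw [hξ, hσar]
      ring
    rw [hD_eq]
    exact mul_pos_of_neg_of_neg (mul_neg_of_neg_of_pos (mul_neg_of_neg_of_pos ha hr) hb)
      (by linarith [sqrt_mul_sub_one_lt hr])
  have hdisc : 0 ≤ (σ - a * r) ^ 2 + 4 * a * σ := by
    rw [lorenzLike_discriminant_eq hσar]
    exact mul_nonneg (sq_nonneg _) (mul_nonneg hr.le (by linarith))
  have hS : IsLorenzLikeEquilibrium r σ b a x₁ y₁ z₁ :=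
    isLorenzLikeEquilibrium_of_quadratic hξ_pos.le hD.ne'
      (lorenzLike_quadratic_of_eq_root ha.ne (sq_sqrt hdisc) rfl)
  exact ⟨hξ, hξ_pos, hD, hS, hS.neg⟩

/-- For the Lorenz-like system with `a < 0`, `σ = −a·r` and `r > 1` (Rabinovich
case), the quantity `ξ = (σb/(2a²))·(a(r−2) − σ + √((σ − ar)² + 4aσ))` equals
`r·b·(√(r(r−1)) − (r−1)) > 0`, `σb + aξ > 0`, and the two symmetric points
`S± = (±x₁, ±y₁, z₁)` are equilibria. -/
theorem stmt_8 (r σ b a : ℝ) (hr : 0 < r) (hσ : 0 < σ) (hb : 0 < b)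
    (ha : a < 0) (hσar : σ = -a * r) (hr1 : 1 < r) :
    let ξ := σ * b / (2 * a ^ 2) *
      (a * (r - 2) - σ + Real.sqrt ((σ - a * r) ^ 2 + 4 * a * σ))
    let x₁ := σ * b * Real.sqrt ξ / (σ * b + a * ξ)
    let y₁ := Real.sqrt ξ
    let z₁ := σ * ξ / (σ * b + a * ξ)
    ξ = r * b * (Real.sqrt (r * (r - 1)) - (r - 1)) ∧ 0 < ξ ∧
    0 < σ * b + a * ξ ∧
    (-σ * (x₁ - y₁) - a * y₁ * z₁ = 0 ∧
      r * x₁ - y₁ - x₁ * z₁ = 0 ∧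
      -b * z₁ + x₁ * y₁ = 0) ∧
    (-σ * (-x₁ - -y₁) - a * -y₁ * z₁ = 0 ∧
      r * -x₁ - -y₁ - -x₁ * z₁ = 0 ∧
      -b * z₁ + -x₁ * -y₁ = 0) :=
  stmt_8_general r σ b a hb ha hσar hr1
end

section
/- Let r, σ, b > 0, a ∈ ℝ, and let δ > 0 satisfy a + δ > 0. Set c = min(σ, 1, b/2), η = (σ + δ·r)/(a + δ), V(x, y, z) = x² + δ·y² + (a + δ)·(z − η)², and R = b·(σ + δ·r)²/(2c·(a + δ)). Then at every point (x, y, z) ∈ ℝ³ with V(x, y, z) > R, the derivative of V along the Lorenz-like vector field is strictly negative: ∇V(x, y, z) · f(x, y, z) < 0. -/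
/-!
Along the field, `V̇ = -2σx² - 2δy² - 2b(a+δ) z(z-η)`: the choice of `η` makes the cross
terms in `xy` and `xyz` cancel. Since `2z(z-η) = (z-η)² + z² - η²`, this gives
`V̇ ≤ -2c V + b(a+δ)η² = -2c (V - R)`, which is negative once `V > R`.
-/

section LorenzLike

variable {r σ b a δ η : ℝ}

theorem lorenzLike_lyapunov_deriv_eq (hη : (a + δ) * η = σ + δ * r) (x y z : ℝ) :
    2 * x * (-σ * (x - y) - a * y * z) + 2 * (δ * y) * (r * x - y - x * z)
        + 2 * ((a + δ) * (z - η)) * (-b * z + x * y)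
      = -2 * (σ * x ^ 2 + δ * y ^ 2 + b * (a + δ) * z * (z - η)) := by
  linear_combination (-2 * x * y) * hη

theorem lorenzLike_dissipation_le {c : ℝ} (hcσ : c ≤ σ) (hc1 : c ≤ 1) (hcb : c ≤ b / 2)
    (hb : 0 ≤ b) (hδ : 0 ≤ δ) (haδ : 0 ≤ a + δ) (x y z : ℝ) :
    -2 * (σ * x ^ 2 + δ * y ^ 2 + b * (a + δ) * z * (z - η))
      ≤ -2 * c * (x ^ 2 + δ * y ^ 2 + (a + δ) * (z - η) ^ 2) + b * (a + δ) * η ^ 2 := by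
  nlinarith [mul_nonneg (sub_nonneg.2 hcσ) (sq_nonneg x),
    mul_nonneg (mul_nonneg (sub_nonneg.2 hc1) hδ) (sq_nonneg y),
    mul_nonneg (mul_nonneg (sub_nonneg.2 hcb) haδ) (sq_nonneg (z - η)),
    mul_nonneg (mul_nonneg hb haδ) (sq_nonneg z)]

end LorenzLike

theorem stmt_19_general (r σ b a δ : ℝ) (hσ : 0 < σ) (hb : 0 < b)
    (hδ : 0 < δ) (haδ : 0 < a + δ) :
    let c := min σ (min 1 (b / 2))
    let η := (σ + δ * r) / (a + δ)
    let V : ℝ → ℝ → ℝ → ℝ := fun X Y Z =>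
      X ^ 2 + δ * Y ^ 2 + (a + δ) * (Z - η) ^ 2
    let R := b * (σ + δ * r) ^ 2 / (2 * c * (a + δ))
    ∀ x y z : ℝ, V x y z > R →
      2 * x * (-σ * (x - y) - a * y * z)
        + 2 * (δ * y) * (r * x - y - x * z)
        + 2 * ((a + δ) * (z - η)) * (-b * z + x * y) < 0 := by
  intro c η V R x y z hV
  have hc : 0 < c := lt_min hσ (lt_min one_pos (half_pos hb))
  have hη : (a + δ) * η = σ + δ * r := mul_div_cancel₀ _ haδ.ne'
  have hR : b * (a + δ) * η ^ 2 = 2 * c * R := by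
    simp only [η, R]
    field_simp
  rw [lorenzLike_lyapunov_deriv_eq hη]
  calc _ ≤ -2 * c * V x y z + b * (a + δ) * η ^ 2 :=
        lorenzLike_dissipation_le (min_le_left _ _) ((min_le_right _ _).trans (min_le_left _ _))
          ((min_le_right _ _).trans (min_le_right _ _)) hb.le hδ.le haδ.le x y z
    _ = -2 * c * (V x y z - R) := by rw [hR]; ring
    _ < 0 := mul_neg_of_neg_of_pos (by linarith) (sub_pos.2 hV)

/-- Outside the absorbing set `B = {V ≤ R}` the Lyapunov function `V` strictly
decreases along the Lorenz-like vector field: at every point with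
`V(x,y,z) > R` one has `∇V(x,y,z) · f(x,y,z) < 0`. -/
theorem stmt_19 (r σ b a δ : ℝ) (hr : 0 < r) (hσ : 0 < σ) (hb : 0 < b)
    (hδ : 0 < δ) (haδ : 0 < a + δ) :
    let c := min σ (min 1 (b / 2))
    let η := (σ + δ * r) / (a + δ)
    let V : ℝ → ℝ → ℝ → ℝ := fun X Y Z =>
      X ^ 2 + δ * Y ^ 2 + (a + δ) * (Z - η) ^ 2
    let R := b * (σ + δ * r) ^ 2 / (2 * c * (a + δ))
    ∀ x y z : ℝ, V x y z > R →
      2 * x * (-σ * (x - y) - a * y * z)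
        + 2 * (δ * y) * (r * x - y - x * z)
        + 2 * ((a + δ) * (z - η)) * (-b * z + x * y) < 0 :=
  stmt_19_general r σ b a δ hσ hb hδ haδ
end
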